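/- Fix an integer m ≥ 2 and a nonempty multiset Z = {z_1, z_2, ..., z_n} of integers. Then disc(Z, m) ≥ 1 − 2π / ⌊(m−1)^{1/n}⌋. -/

import Mathlib

/-!
Simultaneous Dirichlet approximation by pigeonhole: with `b = ⌊(m−1)^{1/n}⌋` we have `b^n < m`,
so two of the `m` points `(frac (k z_j / m))_j`, `0 ≤ k < m`, fall into the same box of side
`1/b`. Their difference `k ∈ (0, m)` puts every `k z_j / m` within `1/b` of an integer, hence
every `ω^{k z_j}` within `2π/b` of `1`, and the average of these `n` unit vectors has modulus at
least `1 − 2π/b`.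
-/

/-- The `m`-discrepancy of a finite multiset `Z` of integers:
`disc(Z, m) = max_{k = 1, …, m−1} |(1/|Z|) · Σ_{z ∈ Z} exp(2πi·k·z/m)|`,
with the convention `disc(∅, m) = 0`. -/
noncomputable def disc (Z : Multiset ℤ) (m : ℕ) : ℝ :=
  if h : (Finset.Ioo 0 m).Nonempty then
    (Finset.Ioo 0 m).sup' h fun k =>
      ‖(Z.map fun z : ℤ =>
        Complex.exp (2 * Real.pi * Complex.I * (k : ℂ) * (z : ℂ) / (m : ℂ))).sum‖ / (Z.card : ℝ)
  else 0

open Complex Real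

theorem exists_abs_mul_sub_int_lt_of_pow_card_lt {ι : Type*} [Fintype ι] (x : ι → ℝ) {b N : ℕ}
    (hb : 0 < b) (hN : b ^ Fintype.card ι < N) :
    ∃ k ∈ Finset.Ioo 0 N, ∀ i, ∃ p : ℤ, |k * x i - p| < 1 / b := by
  classical
  have hb' : (0 : ℝ) < b := by exact_mod_cast hb
  set box : ℕ → ι → ℤ := fun k i => ⌊Int.fract (k * x i) * b⌋
  have hbox : ∀ k ∈ Finset.range N, box k ∈ Fintype.piFinset fun _ : ι => Finset.Ico (0 : ℤ) b := by
    intro k _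
    simp only [Fintype.mem_piFinset, Finset.mem_Ico]
    refine fun i => ⟨Int.floor_nonneg.mpr (by positivity), Int.floor_lt.mpr ?_⟩
    push_cast
    exact mul_lt_of_lt_one_left hb' (Int.fract_lt_one _)
  have hcard :
      (Fintype.piFinset fun _ : ι => Finset.Ico (0 : ℤ) b).card < (Finset.range N).card := by
    simpa using hN
  obtain ⟨k₁, hk₁, k₂, hk₂, hne, heq⟩ := Finset.exists_ne_map_eq_of_card_lt_of_maps_to hcard hbox
  wlog hlt : k₁ < k₂ generalizing k₁ k₂
  · exact this k₂ hk₂ k₁ hk₁ hne.symm heq.symm (lt_of_le_of_ne (not_lt.mp hlt) hne.symm)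
  refine ⟨k₂ - k₁, Finset.mem_Ioo.mpr ⟨Nat.sub_pos_of_lt hlt,
    (Nat.sub_le _ _).trans_lt (Finset.mem_range.mp hk₂)⟩, fun i => ⟨⌊k₂ * x i⌋ - ⌊k₁ * x i⌋, ?_⟩⟩
  have h := Int.abs_sub_lt_one_of_floor_eq_floor (congrFun heq i).symm
  rw [← sub_mul, abs_mul, abs_of_pos hb', ← lt_div_iff₀ hb'] at h
  have hdiff : ((k₂ - k₁ : ℕ) : ℝ) * x i - ((⌊k₂ * x i⌋ - ⌊k₁ * x i⌋ : ℤ) : ℝ)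
      = Int.fract (k₂ * x i) - Int.fract (k₁ * x i) := by
    rw [Nat.cast_sub hlt.le, Int.fract, Int.fract]
    push_cast
    ring
  rwa [hdiff]

theorem Multiset.card_mul_sub_le_norm_sum {E : Type*} [NormedAddCommGroup E] [NormedSpace ℝ E]
    (s : Multiset E) (a : E) {ε : ℝ} (h : ∀ w ∈ s, ‖w - a‖ ≤ ε) :
    s.card * (‖a‖ - ε) ≤ ‖s.sum‖ := by
  have hdev : s.sum - s.card • a = (s.map (· - a)).sum := by
    rw [Multiset.sum_map_sub, Multiset.map_id', Multiset.map_const', Multiset.sum_replicate]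
  have hdev_le : ‖(s.map (· - a)).sum‖ ≤ s.card * ε :=
    calc ‖(s.map (· - a)).sum‖ ≤ (s.map fun w => ‖w - a‖).sum := by
          simpa [Multiset.map_map] using norm_multiset_sum_le (s.map (· - a))
      _ ≤ (s.map fun _ => ε).sum := Multiset.sum_map_le_sum_map _ _ h
      _ = s.card * ε := by simp [Multiset.map_const']
  have := norm_sub_norm_le (s.card • a) (s.card • a - s.sum)
  rw [sub_sub_cancel, norm_sub_rev, hdev, RCLike.norm_nsmul ℝ, nsmul_eq_mul] at this
  linarith

theorem norm_cexp_two_pi_I_mul_sub_one_le (t : ℝ) (p : ℤ) :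
    ‖cexp (2 * π * I * t) - 1‖ ≤ 2 * π * |t - p| := by
  have h : cexp (2 * π * I * t) = cexp (I * ↑(2 * π * (t - p))) * cexp (p * (2 * π * I)) := by
    rw [← Complex.exp_add]; push_cast; ring_nf
  rw [h, exp_int_mul_two_pi_mul_I, mul_one]
  refine (Real.norm_exp_I_mul_ofReal_sub_one_le).trans_eq ?_
  rw [Real.norm_eq_abs, abs_mul, abs_of_pos two_pi_pos]

theorem one_le_floor_rpow_one_div {x : ℝ} (hx : 1 ≤ x) (n : ℕ) : 1 ≤ ⌊x ^ ((1 : ℝ) / n)⌋₊ :=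
  Nat.one_le_floor_iff _ |>.mpr (Real.one_le_rpow hx (by positivity))

theorem floor_rpow_one_div_pow_le {x : ℝ} (hx : 0 ≤ x) {n : ℕ} (hn : n ≠ 0) :
    (⌊x ^ ((1 : ℝ) / n)⌋₊ : ℝ) ^ n ≤ x :=
  calc (⌊x ^ ((1 : ℝ) / n)⌋₊ : ℝ) ^ n ≤ (x ^ ((1 : ℝ) / n)) ^ n :=
        pow_le_pow_left₀ (Nat.cast_nonneg _) (Nat.floor_le (by positivity)) n
    _ = x := by rw [one_div, Real.rpow_inv_natCast_pow hx hn]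

theorem div_card_le_disc {Z : Multiset ℤ} {m k : ℕ} (hk : k ∈ Finset.Ioo 0 m) :
    ‖(Z.map fun z : ℤ => cexp (2 * π * I * (k : ℂ) * (z : ℂ) / (m : ℂ))).sum‖ / (Z.card : ℝ)
      ≤ disc Z m := by
  rw [disc, dif_pos ⟨k, hk⟩]
  apply Finset.le_sup' _ hk

theorem stmt_8 (m : ℕ) (hm : 2 ≤ m) (Z : Multiset ℤ) (hZ : Z ≠ 0) :
    1 - 2 * Real.pi / (⌊((m : ℝ) - 1) ^ ((1 : ℝ) / (Multiset.card Z : ℝ))⌋₊ : ℝ) ≤ disc Z m := by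
  classical
  set n := Multiset.card Z
  set b := ⌊((m : ℝ) - 1) ^ ((1 : ℝ) / (n : ℝ))⌋₊
  have hn : 0 < n := Multiset.card_pos.mpr hZ
  have hm1 : (1 : ℝ) ≤ m - 1 := by
    have : (2 : ℝ) ≤ m := by exact_mod_cast hm
    linarith
  have hb : 1 ≤ b := one_le_floor_rpow_one_div hm1 n
  have hbm : b ^ Fintype.card Z.toFinset < m := by
    have hbn : (b : ℝ) ^ n ≤ m - 1 := floor_rpow_one_div_pow_le (by linarith) hn.ne'
    have hbn' : b ^ n < m := by exact_mod_cast (by linarith : (b : ℝ) ^ n < m)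
    rw [Fintype.card_coe]
    exact (Nat.pow_le_pow_right hb (Multiset.toFinset_card_le Z)).trans_lt hbn'
  obtain ⟨k, hk, happrox⟩ :=
    exists_abs_mul_sub_int_lt_of_pow_card_lt (fun z : Z.toFinset => (z : ℝ) / m) hb hbm
  have hterm : ∀ w ∈ Z.map (fun z : ℤ => cexp (2 * π * I * k * z / m)), ‖w - 1‖ ≤ 2 * π / b := by
    simp only [Multiset.forall_mem_map_iff]
    intro z hz
    obtain ⟨p, hp⟩ := happrox ⟨z, Multiset.mem_toFinset.mpr hz⟩
    have harg : 2 * π * I * k * z / m = 2 * π * I * ((k * (z / m) : ℝ) : ℂ) := by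
      push_cast; ring
    calc ‖cexp (2 * π * I * k * z / m) - 1‖ ≤ 2 * π * |(k : ℝ) * ((z : ℝ) / m) - p| := by
          rw [harg]; exact norm_cexp_two_pi_I_mul_sub_one_le _ p
      _ ≤ 2 * π * (1 / b) := by gcongr
      _ = 2 * π / b := by ring
  have hsum := Multiset.card_mul_sub_le_norm_sum _ 1 hterm
  rw [norm_one, Multiset.card_map] at hsum
  refine le_trans ?_ (div_card_le_disc hk)
  rw [le_div_iff₀ (by exact_mod_cast hn)]
  linarith
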